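/- Let A ∈ ℝ^{m×n}, u ∈ ℝ^n with u ≥ 0, b ∈ ℝ^m, and suppose P_{A,b,u} = {x : Ax = b, 0 ≤ x ≤ u} is nonempty. Then for every x with 0 ≤ x ≤ u there exists x̄ ∈ P_{A,b,u} such that ‖x̄ − x‖_∞ ≤ κ(X_A)·‖Ax − b‖₁ and ‖x̄ − x‖₂ ≤ m·κ(X_A)·‖Ax − b‖₂. -/

import Mathlib

open BigOperators Finset

noncomputable section

open Classical

/-- A nonzero `g ∈ W` is an elementary vector of `W` if no nonzero `h ∈ W`
has strictly smaller support. -/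
def IsElementaryVec {ι : Type*} (W : Submodule ℝ (ι → ℝ)) (g : ι → ℝ) : Prop :=
  g ∈ W ∧ g ≠ 0 ∧ ∀ h : ι → ℝ, h ∈ W → h ≠ 0 → ¬ ({i | h i ≠ 0} ⊂ {i | g i ≠ 0})

/-- The circuit imbalance measure `κ(W)`: the maximum of `|g j / g i|` over elementary
vectors `g` of `W` and `i, j ∈ supp(g)`, with `κ(W) := 1` for the trivial subspaces. -/
noncomputable def kappaSub {ι : Type*} (W : Submodule ℝ (ι → ℝ)) : ℝ :=
  if W = ⊥ ∨ W = ⊤ then 1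
  else sSup {t : ℝ | ∃ g : ι → ℝ, IsElementaryVec W g ∧
    ∃ i j : ι, g i ≠ 0 ∧ g j ≠ 0 ∧ t = |g j / g i|}

/-- `y` conforms to `x` if `x i * y i > 0` whenever `y i ≠ 0`. -/
def Conforms {ι : Type*} (x y : ι → ℝ) : Prop :=
  ∀ i, y i ≠ 0 → x i * y i > 0

/-- The extended subspace `X_A := ker (A | −I_m) ⊆ ℝ^{n+m}`. -/
noncomputable def XA {m n : ℕ} (A : Matrix (Fin m) (Fin n) ℝ) :
    Submodule ℝ (Fin n ⊕ Fin m → ℝ) :=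
  LinearMap.ker (Matrix.fromCols A (-1)).mulVecLin

/-!
Write `x̄ = x - d` and look for `d` in the direction `w = (x - x*, Ax - b) ∈ X_A`, where `x*` is
any point of `P_{A,b,u}`. Decompose `w` conformally into elementary vectors of `X_A` and keep those
that touch the last `m` coordinates: their sum `d` still lies in `X_A` and agrees with `w` there,
so `A(x - d) = b`, while conformality keeps `x - d` between `x` and `x*`, hence in `[0, u]`.
Each kept elementary vector has a nonzero entry among the last `m` coordinates, so its first block is bounded
by `κ(X_A)` times that entry, and it has at most `m` nonzero entries there since elementary vectors
of the kernel of an `m`-row matrix have support of size at most `m + 1`. Summing over the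
decomposition, whose last blocks add up in absolute value to `|Ax - b|`, gives the `ℓ∞` bound and an
`ℓ₁` bound with an extra factor `m`; the `ℓ₂` bound follows by interpolation and Cauchy–Schwarz.
-/

open Function

variable {ι : Type*}

namespace Conforms

variable {w v : ι → ℝ}

theorem support_subset (h : Conforms w v) : support v ⊆ support w := fun i hi hw => by
  simpa [hw] using h i hi

theorem trans {z : ι → ℝ} (hwv : Conforms w v) (hvz : Conforms v z) : Conforms w z := by
  intro i hi
  have hvz_i := hvz i hi
  have hwv_i := hwv i fun h => by simp [h] at hvz_i
  have : 0 < (w i * z i) * (v i * v i) := by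
    rw [show w i * z i * (v i * v i) = (w i * v i) * (v i * z i) by ring]
    exact mul_pos hwv_i hvz_i
  exact pos_of_mul_pos_left this (mul_self_nonneg _)

theorem smul (h : Conforms w v) {t : ℝ} (ht : 0 < t) : Conforms w (t • v) := by
  intro i hi
  have hvi : v i ≠ 0 := fun h => hi (by simp [h])
  simpa [mul_left_comm] using mul_pos ht (h i hvi)

theorem nonneg_of_nonneg (h : Conforms w v) {i : ι} (hw : 0 ≤ w i) : 0 ≤ v i := by
  by_contra! hv
  exact hv.not_gt (pos_of_mul_pos_right (h i hv.ne) hw)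

theorem nonpos_of_nonpos (h : Conforms w v) {i : ι} (hw : w i ≤ 0) : v i ≤ 0 := by
  by_contra! hv
  exact hv.not_gt (neg_of_mul_pos_right (h i hv.ne') hw)

end Conforms

theorem conforms_sub_of_abs_le {v d : ι → ℝ} (hd : ∀ i, |d i| ≤ |v i|) : Conforms v (v - d) := by
  intro i hi
  have hvi : v i ≠ 0 := by
    intro hv
    have hdi := hd i
    rw [hv, abs_zero, abs_nonpos_iff] at hdi
    exact hi (by simp [hv, hdi])
  have : v i * d i ≤ v i * v i :=
    calc v i * d i ≤ |v i| * |d i| := (le_abs_self _).trans (abs_mul _ _).le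
      _ ≤ |v i| * |v i| := mul_le_mul_of_nonneg_left (hd i) (abs_nonneg _)
      _ = v i * v i := abs_mul_abs_self _
  refine lt_of_le_of_ne ?_ (mul_ne_zero hvi hi).symm
  simp only [Pi.sub_apply, mul_sub]
  linarith

section ConformalFamily

variable {K : Type*} [Fintype K] {w : ι → ℝ} {h : K → ι → ℝ}

theorem sum_abs_apply_eq_of_conforms (hconf : ∀ k, Conforms w (h k)) (hsum : ∑ k, h k = w)
    (i : ι) : ∑ k, |h k i| = |w i| := by
  have hsum_i : ∑ k, h k i = w i := by rw [← hsum, Finset.sum_apply]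
  rcases le_total 0 (w i) with hw | hw
  · rw [abs_of_nonneg hw, ← hsum_i]
    exact sum_congr rfl fun k _ => abs_of_nonneg ((hconf k).nonneg_of_nonneg hw)
  · rw [abs_of_nonpos hw, ← hsum_i, ← sum_neg_distrib]
    exact sum_congr rfl fun k _ => abs_of_nonpos ((hconf k).nonpos_of_nonpos hw)

theorem sum_apply_mem_uIcc_of_conforms (hconf : ∀ k, Conforms w (h k)) (hsum : ∑ k, h k = w)
    (S : Finset K) (i : ι) : ∑ k ∈ S, h k i ∈ Set.uIcc 0 (w i) := by
  have hsum_i : ∑ k, h k i = w i := by rw [← hsum, Finset.sum_apply]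
  rcases le_total 0 (w i) with hw | hw
  · have hnn k : 0 ≤ h k i := (hconf k).nonneg_of_nonneg hw
    exact Set.Icc_subset_uIcc ⟨sum_nonneg fun k _ => hnn k, hsum_i ▸ sum_le_univ_sum_of_nonneg hnn⟩
  · have hnp k : h k i ≤ 0 := (hconf k).nonpos_of_nonpos hw
    refine Set.Icc_subset_uIcc' ⟨hsum_i ▸ ?_, sum_nonpos fun k _ => hnp k⟩
    exact sum_le_sum_of_subset_of_nonpos' (subset_univ S) fun k _ _ => hnp k

end ConformalFamily

/-- Cancelling one coordinate of `v` with the multiple of `h` that has the smallest ratio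
`|v i / h i|` keeps the result conformal to `v`. -/
theorem exists_conforms_sub_smul [Fintype ι] {v h : ι → ℝ} (hsupp : support h ⊆ support v)
    (h0 : h ≠ 0) :
    ∃ i, h i ≠ 0 ∧ Conforms v (v - (v i / h i) • h) ∧
      support (v - (v i / h i) • h) ⊂ support v := by
  obtain ⟨i, hi, hmin⟩ := (univ.filter (h · ≠ 0)).exists_min_image (fun i => |v i / h i|)
    (by simpa [Finset.Nonempty, funext_iff] using h0)
  rw [mem_filter] at hi
  have hconf : Conforms v (v - (v i / h i) • h) := by
    refine conforms_sub_of_abs_le fun j => ?_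
    by_cases hj : h j = 0
    · simp [hj]
    calc |((v i / h i) • h) j| = |v i / h i| * |h j| := by simp [abs_mul]
      _ ≤ |v j / h j| * |h j| :=
          mul_le_mul_of_nonneg_right (hmin j (by simpa using hj)) (abs_nonneg _)
      _ = |v j| := by rw [← abs_mul, div_mul_cancel₀ _ hj]
  refine ⟨i, hi.2, hconf, (Set.ssubset_iff_of_subset hconf.support_subset).2 ⟨i, hsupp hi.2, ?_⟩⟩
  simp [div_mul_cancel₀ _ hi.2]

namespace IsElementaryVec

variable {W : Submodule ℝ (ι → ℝ)} {g : ι → ℝ}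

theorem eq_zero_of_support_ssubset (hg : IsElementaryVec W g) {h : ι → ℝ} (hh : h ∈ W)
    (hs : support h ⊂ support g) : h = 0 := by
  by_contra h0
  exact hg.2.2 h hh h0 hs

theorem smul (hg : IsElementaryVec W g) {c : ℝ} (hc : c ≠ 0) : IsElementaryVec W (c • g) := by
  refine ⟨W.smul_mem c hg.1, smul_ne_zero hc hg.2.1, fun h hh h0 hs => h0 ?_⟩
  change support h ⊂ support (c • g) at hs
  exact hg.eq_zero_of_support_ssubset hh (by rwa [support_const_smul_of_ne_zero c g hc] at hs)

theorem div_eq_div_of_support_eq (hg : IsElementaryVec W g) {g' : ι → ℝ} (hg' : g' ∈ W)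
    (hs : support g = support g') {i : ι} (hi : g i ≠ 0) (j : ι) :
    g j / g i = g' j / g' i := by
  have hi' : g' i ≠ 0 := (hs ▸ hi : i ∈ support g')
  set c := g i / g' i
  have hg_eq : g = c • g' := by
    rw [← sub_eq_zero]
    refine hg.eq_zero_of_support_ssubset (W.sub_mem hg.1 (W.smul_mem c hg')) ?_
    refine (Set.ssubset_iff_of_subset fun k hk => ?_).2 ⟨i, hi, by simp [c, div_mul_cancel₀ _ hi']⟩
    exact support_sub _ _ hk |>.elim id fun hk' => hs ▸ support_smul_subset_right _ _ hk'
  rw [hg_eq]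
  simp only [Pi.smul_apply, smul_eq_mul]
  exact mul_div_mul_left _ _ (div_ne_zero hi hi')

theorem apply_eq_zero_of_top (hg : IsElementaryVec ⊤ g) {i j : ι} (hi : g i ≠ 0) (hji : j ≠ i) :
    g j = 0 := by
  classical
  by_contra hj
  have hsingle : Pi.single i (g i) = (0 : ι → ℝ) :=
    hg.eq_zero_of_support_ssubset Submodule.mem_top <|
      (Set.ssubset_iff_of_subset (Pi.support_single_subset.trans (by simpa using hi))).2
        ⟨j, hj, fun hj' => hji (Pi.support_single_subset hj')⟩
  exact hi (by simpa using congrFun hsingle i)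

end IsElementaryVec

/-- The ratio `|g j / g i|` only depends on the support of `g`, so only finitely many occur. -/
theorem bddAbove_circuit_ratios [Finite ι] (W : Submodule ℝ (ι → ℝ)) :
    BddAbove {t : ℝ | ∃ g : ι → ℝ, IsElementaryVec W g ∧
      ∃ i j : ι, g i ≠ 0 ∧ g j ≠ 0 ∧ t = |g j / g i|} := by
  let ratios (p : Set ι × ι × ι) : Set ℝ :=
    {t | ∃ g, IsElementaryVec W g ∧ support g = p.1 ∧ g p.2.1 ≠ 0 ∧ t = |g p.2.2 / g p.2.1|}
  have hsub : ∀ p, (ratios p).Subsingleton := by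
    rintro ⟨s, i, j⟩ _ ⟨g, hg, hs, hi, rfl⟩ _ ⟨g', hg', hs', -, rfl⟩
    rw [hg.div_eq_div_of_support_eq hg'.1 (hs.trans hs'.symm) hi]
  refine ((Set.finite_iUnion fun p => (hsub p).finite).subset ?_).bddAbove
  rintro _ ⟨g, hg, i, j, hi, -, rfl⟩
  exact Set.mem_iUnion.2 ⟨(support g, i, j), g, hg, rfl, hi, rfl⟩

theorem kappaSub_nonneg (W : Submodule ℝ (ι → ℝ)) : 0 ≤ kappaSub W := by
  unfold kappaSub
  split_ifs
  · exact zero_le_one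
  · exact Real.sSup_nonneg fun _ ⟨_, _, _, _, _, _, ht⟩ => ht ▸ abs_nonneg _

namespace IsElementaryVec

variable [Finite ι] {W : Submodule ℝ (ι → ℝ)} {g : ι → ℝ}

theorem abs_div_le_kappaSub (hg : IsElementaryVec W g) {i j : ι} (hi : g i ≠ 0) (hj : g j ≠ 0) :
    |g j / g i| ≤ kappaSub W := by
  unfold kappaSub
  split_ifs with hW
  · obtain hW | rfl := hW
    · exact absurd ((Submodule.mem_bot ℝ).1 (hW ▸ hg.1)) hg.2.1
    obtain rfl : j = i := by_contra fun hji => hj (hg.apply_eq_zero_of_top hi hji)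
    simp [hi]
  · exact le_csSup (bddAbove_circuit_ratios W) ⟨g, hg, i, j, hi, hj, rfl⟩

theorem abs_le_kappaSub_mul (hg : IsElementaryVec W g) {i : ι} (hi : g i ≠ 0) (j : ι) :
    |g j| ≤ kappaSub W * |g i| := by
  by_cases hj : g j = 0
  · simpa [hj] using mul_nonneg (kappaSub_nonneg W) (abs_nonneg (g i))
  · have := hg.abs_div_le_kappaSub hi hj
    rwa [abs_div, div_le_iff₀ (abs_pos.2 hi)] at this

end IsElementaryVec

section ConformalDecomposition

variable [Fintype ι] {W : Submodule ℝ (ι → ℝ)}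

theorem exists_isElementaryVec_conforms {w : ι → ℝ} (hw : w ∈ W) (hw0 : w ≠ 0) :
    ∃ v, IsElementaryVec W v ∧ Conforms w v := by
  induction hn : (support w).ncard using Nat.strong_induction_on generalizing w with | _ n ih
  by_cases hel : IsElementaryVec W w
  · exact ⟨w, hel, fun i hi => mul_self_pos.2 hi⟩
  obtain ⟨h, hhW, hh0, hss⟩ : ∃ h ∈ W, h ≠ 0 ∧ {i | h i ≠ 0} ⊂ {i | w i ≠ 0} := by
    simpa [IsElementaryVec, hw, hw0] using hel
  obtain ⟨i, -, hconf, hlt⟩ := exists_conforms_sub_smul hss.subset hh0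
  have hw'0 : w - (w i / h i) • h ≠ 0 := fun h0 => hss.not_subset <| by
    rw [sub_eq_zero.1 h0]
    exact support_const_smul_subset _ _
  obtain ⟨v, hv, hconf'⟩ :=
    ih _ (hn ▸ Set.ncard_lt_ncard hlt) (W.sub_mem hw (W.smul_mem _ hhW)) hw'0 rfl
  exact ⟨v, hv, hconf.trans hconf'⟩

theorem exists_conformal_decomposition {w : ι → ℝ} (hw : w ∈ W) :
    ∃ (K : ℕ) (h : Fin K → ι → ℝ),
      (∀ k, IsElementaryVec W (h k)) ∧ (∀ k, Conforms w (h k)) ∧ ∑ k, h k = w := by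
  induction hn : (support w).ncard using Nat.strong_induction_on generalizing w with | _ n ih
  by_cases hw0 : w = 0
  · exact ⟨0, finZeroElim, finZeroElim, finZeroElim, by simp [hw0]⟩
  obtain ⟨v, hv, hwv⟩ := exists_isElementaryVec_conforms hw hw0
  obtain ⟨i, hi, hconf, hlt⟩ := exists_conforms_sub_smul hwv.support_subset hv.2.1
  have ht : 0 < w i / v i := div_pos_iff.2 (mul_pos_iff.1 (hwv i hi))
  obtain ⟨K, h, helem, hconf', hsum⟩ :=
    ih _ (hn ▸ Set.ncard_lt_ncard hlt) (W.sub_mem hw (W.smul_mem (w i / v i) hv.1)) rfl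
  refine ⟨K + 1, Fin.cons ((w i / v i) • v) h, Fin.forall_fin_succ.2 ⟨?_, ?_⟩,
    Fin.forall_fin_succ.2 ⟨?_, ?_⟩, by rw [Fin.sum_cons, hsum, add_sub_cancel]⟩
  · simpa using hv.smul ht.ne'
  · simpa using helem
  · simpa using hwv.smul ht
  · simpa using fun k => hconf.trans (hconf' k)

end ConformalDecomposition

section Kernel

variable [Fintype ι] {μ : Type*} [Fintype μ] {B : Matrix μ ι ℝ} {g : ι → ℝ}

/-- Removing one point from the support of `g` leaves more than `card μ` columns of `B`, which are
then dependent; a dependency is a vector of the kernel with smaller support. -/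
theorem IsElementaryVec.card_support_le (hg : IsElementaryVec (LinearMap.ker B.mulVecLin) g) :
    #(univ.filter (g · ≠ 0)) ≤ Fintype.card μ + 1 := by
  by_contra! hcard
  obtain ⟨i₀, hi₀⟩ : (univ.filter (g · ≠ 0)).Nonempty := card_pos.1 (by omega)
  set T := (univ.filter (g · ≠ 0)).erase i₀
  have hdep : ¬ LinearIndependent ℝ (fun t : T => fun r => B r t) := fun hli => by
    have := hli.fintype_card_le_finrank
    simp only [Fintype.card_coe, Module.finrank_fintype_fun_eq_card] at this
    rw [card_erase_of_mem hi₀] at this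
    omega
  obtain ⟨c, hc, t₀, ht₀⟩ := Fintype.not_linearIndependent_iff.1 hdep
  set h : ι → ℝ := fun i => if hi : i ∈ T then c ⟨i, hi⟩ else 0
  have hker : h ∈ LinearMap.ker B.mulVecLin := by
    rw [LinearMap.mem_ker, Matrix.mulVecLin_apply]
    ext r
    have hr := congrFun hc r
    simp only [Finset.sum_apply, Pi.smul_apply, smul_eq_mul, Pi.zero_apply] at hr
    rw [Pi.zero_apply, Matrix.mulVec, dotProduct,
      ← sum_subset (subset_univ T) fun i _ hi => by simp [h, hi], ← sum_coe_sort T, ← hr]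
    exact sum_congr rfl fun t _ => by simp [h, t.2, mul_comm]
  have hsupp : support h ⊂ support g := by
    refine (Set.ssubset_iff_of_subset fun i hi => ?_).2 ⟨i₀, by simpa using hi₀, by simp [h, T]⟩
    by_cases hiT : i ∈ T
    · simp only [T, mem_erase, mem_filter] at hiT
      exact hiT.2.2
    · simp [h, hiT] at hi
  exact ht₀ (by simpa [h] using congrFun (hg.eq_zero_of_support_ssubset hker hsupp) t₀)

theorem IsElementaryVec.sum_abs_erase_le [DecidableEq ι]
    (hg : IsElementaryVec (LinearMap.ker B.mulVecLin) g)
    {p : ι} (hp : g p ≠ 0) :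
    ∑ i ∈ univ.erase p, |g i| ≤ Fintype.card μ * kappaSub (LinearMap.ker B.mulVecLin) * |g p| := by
  set F := univ.filter (g · ≠ 0)
  have hpF : p ∈ F := by simpa [F] using hp
  calc ∑ i ∈ univ.erase p, |g i| = ∑ i ∈ F.erase p, |g i| :=
        (sum_subset (erase_subset_erase p (subset_univ F)) fun i hi hiF => by
          simp_all [F, mem_erase]).symm
    _ ≤ #(F.erase p) • (kappaSub (LinearMap.ker B.mulVecLin) * |g p|) :=
        sum_le_card_nsmul _ _ _ fun i _ => hg.abs_le_kappaSub_mul hp i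
    _ ≤ Fintype.card μ * kappaSub (LinearMap.ker B.mulVecLin) * |g p| := by
        rw [nsmul_eq_mul, mul_assoc]
        refine mul_le_mul_of_nonneg_right ?_
          (mul_nonneg (kappaSub_nonneg _) (abs_nonneg _))
        have : #F ≤ Fintype.card μ + 1 := hg.card_support_le
        rw [card_erase_of_mem hpF]
        exact_mod_cast (by omega : #F - 1 ≤ Fintype.card μ)

end Kernel

section Blocks

variable {τ μ : Type*} [Fintype ι] [Fintype τ] [Fintype μ] {g : ι ⊕ τ → ℝ} {j : τ}

theorem IsElementaryVec.abs_inl_le {W : Submodule ℝ (ι ⊕ τ → ℝ)} (hg : IsElementaryVec W g)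
    (hj : g (.inr j) ≠ 0) (i : ι) :
    |g (.inl i)| ≤ kappaSub W * ∑ j', |g (.inr j')| :=
  (hg.abs_le_kappaSub_mul hj _).trans <| mul_le_mul_of_nonneg_left
    (single_le_sum (f := fun j' => |g (.inr j')|) (fun _ _ => abs_nonneg _) (mem_univ j))
    (kappaSub_nonneg W)

theorem IsElementaryVec.sum_abs_inl_le {B : Matrix μ (ι ⊕ τ) ℝ}
    (hg : IsElementaryVec (LinearMap.ker B.mulVecLin) g) (hj : g (.inr j) ≠ 0) :
    ∑ i, |g (.inl i)| ≤
      Fintype.card μ * kappaSub (LinearMap.ker B.mulVecLin) * ∑ j', |g (.inr j')| := by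
  have hj_le : |g (.inr j)| ≤ ∑ j', |g (.inr j')| :=
    single_le_sum (f := fun j' => |g (.inr j')|) (fun _ _ => abs_nonneg _) (mem_univ j)
  calc ∑ i, |g (.inl i)| ≤ ∑ p ∈ univ.erase (.inr j), |g p| := by
        rw [sum_erase_eq_sub (mem_univ _), Fintype.sum_sum_type]
        linarith
    _ ≤ Fintype.card μ * kappaSub (LinearMap.ker B.mulVecLin) * |g (.inr j)| :=
        hg.sum_abs_erase_le hj
    _ ≤ Fintype.card μ * kappaSub (LinearMap.ker B.mulVecLin) * ∑ j', |g (.inr j')| :=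
        mul_le_mul_of_nonneg_left hj_le (mul_nonneg (Nat.cast_nonneg _) (kappaSub_nonneg _))

theorem exists_mem_ker_eq_on_inr_with_kappa_bounds {B : Matrix μ (ι ⊕ τ) ℝ} {w : ι ⊕ τ → ℝ}
    (hw : w ∈ LinearMap.ker B.mulVecLin) :
    ∃ d ∈ LinearMap.ker B.mulVecLin, (∀ j, d (.inr j) = w (.inr j)) ∧
      (∀ i, d (.inl i) ∈ Set.uIcc 0 (w (.inl i))) ∧
      (∀ i, |d (.inl i)| ≤ kappaSub (LinearMap.ker B.mulVecLin) * ∑ j, |w (.inr j)|) ∧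
      ∑ i, |d (.inl i)| ≤
        Fintype.card μ * kappaSub (LinearMap.ker B.mulVecLin) * ∑ j, |w (.inr j)| := by
  set κ := kappaSub (LinearMap.ker B.mulVecLin)
  have hκ : 0 ≤ κ := kappaSub_nonneg _
  obtain ⟨K, h, helem, hconf, hsum⟩ := exists_conformal_decomposition hw
  set S := univ.filter fun k => ∃ j, h k (.inr j) ≠ 0
  have hmass : ∑ k ∈ S, ∑ j, |h k (.inr j)| ≤ ∑ j, |w (.inr j)| :=
    calc ∑ k ∈ S, ∑ j, |h k (.inr j)| ≤ ∑ k, ∑ j, |h k (.inr j)| :=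
          sum_le_univ_sum_of_nonneg fun k => sum_nonneg fun j _ => abs_nonneg _
      _ = ∑ j, |w (.inr j)| := by
          rw [sum_comm]
          exact sum_congr rfl fun j _ => sum_abs_apply_eq_of_conforms hconf hsum _
  refine ⟨∑ k ∈ S, h k, Submodule.sum_mem _ fun k _ => (helem k).1, fun j => ?_, fun i => ?_,
    fun i => ?_, ?_⟩
  · rw [← hsum, Finset.sum_apply, Finset.sum_apply]
    refine sum_subset (subset_univ S) fun k _ hk => ?_
    simp only [S, mem_filter, mem_univ, true_and, not_exists, not_not] at hk
    exact hk j
  · rw [Finset.sum_apply]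
    exact sum_apply_mem_uIcc_of_conforms hconf hsum S _
  · calc |(∑ k ∈ S, h k) (.inl i)| ≤ ∑ k ∈ S, |h k (.inl i)| := by
          rw [Finset.sum_apply]
          exact abs_sum_le_sum_abs _ _
      _ ≤ ∑ k ∈ S, κ * ∑ j, |h k (.inr j)| := sum_le_sum fun k hk => by
          obtain ⟨j, hj⟩ := (mem_filter.1 hk).2
          exact (helem k).abs_inl_le hj i
      _ ≤ κ * ∑ j, |w (.inr j)| := by
          rw [← mul_sum]
          exact mul_le_mul_of_nonneg_left hmass hκ
  · calc ∑ i, |(∑ k ∈ S, h k) (.inl i)| ≤ ∑ i, ∑ k ∈ S, |h k (.inl i)| :=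
          sum_le_sum fun i _ => by
            rw [Finset.sum_apply]
            exact abs_sum_le_sum_abs _ _
      _ ≤ ∑ k ∈ S, Fintype.card μ * κ * ∑ j, |h k (.inr j)| := by
          rw [sum_comm]
          refine sum_le_sum fun k hk => ?_
          obtain ⟨j, hj⟩ := (mem_filter.1 hk).2
          exact (helem k).sum_abs_inl_le hj
      _ ≤ Fintype.card μ * κ * ∑ j, |w (.inr j)| := by
          rw [← mul_sum]
          exact mul_le_mul_of_nonneg_left hmass (mul_nonneg (Nat.cast_nonneg _) hκ)

end Blocks

/-- Interpolation `‖v‖₂² ≤ ‖v‖_∞ ‖v‖₁` followed by Cauchy–Schwarz `‖r‖₁² ≤ card τ ‖r‖₂²`. -/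
theorem sqrt_sum_sq_le_of_abs_le_of_sum_abs_le {τ : Type*} [Fintype ι] [Fintype τ] {v : ι → ℝ}
    {r : τ → ℝ} {c : ℝ} (hc : 0 ≤ c) (hinf : ∀ i, |v i| ≤ c * ∑ j, |r j|)
    (hone : ∑ i, |v i| ≤ Fintype.card τ * c * ∑ j, |r j|) :
    √(∑ i, v i ^ 2) ≤ Fintype.card τ * c * √(∑ j, r j ^ 2) := by
  have hcs : (∑ j, |r j|) ^ 2 ≤ Fintype.card τ * ∑ j, r j ^ 2 := by
    simpa using sq_sum_le_card_mul_sum_sq (s := univ) (f := fun j => |r j|)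
  have hsq : ∑ i, v i ^ 2 ≤ (Fintype.card τ * c) ^ 2 * ∑ j, r j ^ 2 :=
    calc ∑ i, v i ^ 2 = ∑ i, |v i| * |v i| := sum_congr rfl fun i _ => by rw [abs_mul_abs_self, sq]
      _ ≤ ∑ i, c * (∑ j, |r j|) * |v i| :=
          sum_le_sum fun i _ => mul_le_mul_of_nonneg_right (hinf i) (abs_nonneg _)
      _ ≤ c * (∑ j, |r j|) * (Fintype.card τ * c * ∑ j, |r j|) := by
          rw [← mul_sum]
          exact mul_le_mul_of_nonneg_left hone (mul_nonneg hc (sum_nonneg fun _ _ => abs_nonneg _))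
      _ = Fintype.card τ * c ^ 2 * (∑ j, |r j|) ^ 2 := by ring
      _ ≤ Fintype.card τ * c ^ 2 * (Fintype.card τ * ∑ j, r j ^ 2) := by gcongr
      _ = (Fintype.card τ * c) ^ 2 * ∑ j, r j ^ 2 := by ring
  calc √(∑ i, v i ^ 2) ≤ √((Fintype.card τ * c) ^ 2 * ∑ j, r j ^ 2) := Real.sqrt_le_sqrt hsq
    _ = Fintype.card τ * c * √(∑ j, r j ^ 2) := by
        rw [Real.sqrt_mul (sq_nonneg _), Real.sqrt_sq (by positivity)]

theorem sumElim_mem_XA_iff {m n : ℕ} {A : Matrix (Fin m) (Fin n) ℝ} {z : Fin n → ℝ}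
    {y : Fin m → ℝ} : Sum.elim z y ∈ XA A ↔ A.mulVec z = y := by
  rw [XA, LinearMap.mem_ker, Matrix.mulVecLin_apply, Matrix.fromCols_mulVec_sumElim,
    Matrix.neg_mulVec, Matrix.one_mulVec, ← sub_eq_add_neg, sub_eq_zero]

theorem hoffman_proximity_kappa_general {m n : ℕ} (A : Matrix (Fin m) (Fin n) ℝ)
    (u : Fin n → ℝ) (b : Fin m → ℝ)
    (hne : ∃ x : Fin n → ℝ, A.mulVec x = b ∧ 0 ≤ x ∧ x ≤ u)
    (x : Fin n → ℝ) (hx0 : 0 ≤ x) (hxu : x ≤ u) :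
    ∃ xb : Fin n → ℝ, (A.mulVec xb = b ∧ 0 ≤ xb ∧ xb ≤ u) ∧
      (⨆ i, |xb i - x i|) ≤ kappaSub (XA A) * ∑ j, |A.mulVec x j - b j| ∧
      Real.sqrt (∑ i, (xb i - x i) ^ 2) ≤
        m * kappaSub (XA A) * Real.sqrt (∑ j, (A.mulVec x j - b j) ^ 2) := by
  obtain ⟨xs, hAxs, hxs0, hxsu⟩ := hne
  have hw : Sum.elim (x - xs) (A.mulVec x - b) ∈ XA A :=
    sumElim_mem_XA_iff.2 (by rw [Matrix.mulVec_sub, hAxs])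
  obtain ⟨d, hdX, hd_inr, hd_mem, hd_inf, hd_one⟩ := exists_mem_ker_eq_on_inr_with_kappa_bounds hw
  simp only [Sum.elim_inl, Sum.elim_inr, Pi.sub_apply] at hd_inr hd_mem hd_inf hd_one
  dsimp only [XA]
  have hAd : A.mulVec (d ∘ Sum.inl) = d ∘ Sum.inr :=
    sumElim_mem_XA_iff.1 (by rwa [Sum.elim_comp_inl_inr])
  have hbox i : x i - d (.inl i) ∈ Set.Icc 0 (u i) := by
    have := Set.mem_image_of_mem (x i - ·) (hd_mem i)
    rw [Set.image_const_sub_uIcc, sub_zero, sub_sub_cancel] at this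
    exact Set.uIcc_subset_Icc ⟨hx0 i, hxu i⟩ ⟨hxs0 i, hxsu i⟩ this
  refine ⟨x - d ∘ Sum.inl, ⟨?_, fun i => (hbox i).1, fun i => (hbox i).2⟩, ?_, ?_⟩
  · ext j
    simp [Matrix.mulVec_sub, hAd, hd_inr]
  · exact Real.iSup_le (fun i => by simpa using hd_inf i)
      (mul_nonneg (kappaSub_nonneg _) (sum_nonneg fun _ _ => abs_nonneg _))
  · simpa using sqrt_sum_sq_le_of_abs_le_of_sum_abs_le (kappaSub_nonneg _) hd_inf hd_one

/-- Hoffman-type proximity in terms of the circuit imbalance measure: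
if `P_{A,b,u} = {x : Ax = b, 0 ≤ x ≤ u}` is nonempty, then for every `x ∈ [0,u]`
there is `x̄ ∈ P_{A,b,u}` with `‖x̄ − x‖_∞ ≤ κ(X_A)·‖Ax − b‖₁` and
`‖x̄ − x‖₂ ≤ m·κ(X_A)·‖Ax − b‖₂`. -/
theorem hoffman_proximity_kappa {m n : ℕ} (A : Matrix (Fin m) (Fin n) ℝ)
    (u : Fin n → ℝ) (hu : 0 ≤ u) (b : Fin m → ℝ)
    (hne : ∃ x : Fin n → ℝ, A.mulVec x = b ∧ 0 ≤ x ∧ x ≤ u)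
    (x : Fin n → ℝ) (hx0 : 0 ≤ x) (hxu : x ≤ u) :
    ∃ xb : Fin n → ℝ, (A.mulVec xb = b ∧ 0 ≤ xb ∧ xb ≤ u) ∧
      (⨆ i, |xb i - x i|) ≤ kappaSub (XA A) * ∑ j, |A.mulVec x j - b j| ∧
      Real.sqrt (∑ i, (xb i - x i) ^ 2) ≤
        m * kappaSub (XA A) * Real.sqrt (∑ j, (A.mulVec x j - b j) ^ 2) :=
  hoffman_proximity_kappa_general A u b hne x hx0 hxu
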